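/- Suppose f is convex (and strictly decreasing, with intercepts L and M) and σ, τ > −1. Then for every c > 1 and every η > 0 there exists r₀ > 0 such that for all r ≥ r₀ and all s with c⁻¹ < s < c, N(r, s) ≤ r² A − r (s⁻¹ τ L + s (σ + 1/2) M) + η r. -/

import Mathlib

open Set Filter Asymptotics MeasureTheory

noncomputable section

/-- The negative part `x⁻ = max(−x, 0)` of a real number. -/
def nneg (x : ℝ) : ℝ := max (-x) 0

/-- The shifted-lattice counting function `N(r,s)`: the number of points of the
shifted lattice `(ℕ+σ) × (ℕ+τ)` lying inside or on the curve `rΓ(s)`. -/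
def countN (f : ℝ → ℝ) (σ τ L r s : ℝ) : ℕ :=
  Set.ncard {p : ℤ × ℤ | 1 ≤ p.1 ∧ 1 ≤ p.2 ∧ ((p.1 : ℝ) + σ) * s / r ≤ L ∧
    (p.2 : ℝ) + τ ≤ r * s * f (((p.1 : ℝ) + σ) * s / r)}

/-- The set `S(r)` of stretch factors `s > 0` maximizing `s ↦ N(r,s)`. -/
def maximizers (f : ℝ → ℝ) (σ τ L r : ℝ) : Set ℝ :=
  {s | 0 < s ∧ ∀ s' > 0, countN f σ τ L r s' ≤ countN f σ τ L r s}

/-!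
The `j`-th column of lattice points, at `x_j = (j + σ) h` with mesh `h = s / r`, holds at most
`max (r s f(x_j) - τ) 0` points. Replacing this by `r s f(x_j) - τ` costs at most `max τ 0` on
each column where `r s f(x_j) < τ`; these columns lie within a fixed `δ` of `L`, so there are
`O(δ r)` of them. The `n ≈ L / h - σ` columns contribute `-n τ ≈ -s⁻¹ τ L r`. The Riemann sum
`h Σ f(x_j)` is compared with `∫ f` by the midpoint rule, which underestimates integrals of
convex functions; the first column, whose cell `[0, (σ + 3/2) h]` is longer than `h`, produces
the correction `-(σ + 1/2) M h` because `f ≈ M` near `0`, and the last one costs only `o(h)`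
because `f ≈ 0` near `L`.
-/

section Continuity

variable {α β : Type*} [TopologicalSpace α] [LinearOrder α] [OrderTopology α] [DenselyOrdered α]
  [TopologicalSpace β] [LinearOrder β] [OrderClosedTopology β] {f : α → β} {a b : α} {y : β}

theorem ContinuousOn.exists_mem_Ioc_lt_apply (hab : a < b) (hf : ContinuousOn f (Icc a b))
    (hy : y < f a) : ∃ x ∈ Ioc a b, y < f x :=
  haveI := left_nhdsWithin_Ioc_neBot hab
  (eventually_mem_nhdsWithin.and
    (((hf a (left_mem_Icc.2 hab.le)).mono Ioc_subset_Icc_self).eventually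
      (Ioi_mem_nhds hy))).exists

theorem ContinuousOn.exists_mem_Ico_apply_lt (hab : a < b) (hf : ContinuousOn f (Icc a b))
    (hy : f b < y) : ∃ x ∈ Ico a b, f x < y :=
  haveI := right_nhdsWithin_Ico_neBot hab
  (eventually_mem_nhdsWithin.and
    (((hf b (right_mem_Icc.2 hab.le)).mono Ico_subset_Icc_self).eventually
      (Iio_mem_nhds hy))).exists

end Continuity

theorem ConvexOn.mul_le_integral_midpoint {f : ℝ → ℝ} {a b : ℝ} (hab : a ≤ b)
    (hf : ConvexOn ℝ (Icc a b) f) (hfc : ContinuousOn f (Icc a b)) :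
    (b - a) * f ((a + b) / 2) ≤ ∫ x in a..b, f x := by
  have hint : IntervalIntegrable f volume a b := hfc.intervalIntegrable_of_Icc hab
  have hrefl : IntervalIntegrable (fun x => f (a + b - x)) volume a b := by
    simpa using (hint.comp_sub_left (a + b)).symm
  have hpair : ∀ x ∈ Icc a b, 2 * f ((a + b) / 2) ≤ f x + f (a + b - x) := by
    intro x hx
    have hx' : a + b - x ∈ Icc a b := ⟨by linarith [hx.2], by linarith [hx.1]⟩
    have := hf.2 hx hx' (by norm_num : (0:ℝ) ≤ 1 / 2) (by norm_num : (0:ℝ) ≤ 1 / 2)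
      (by norm_num)
    simp only [smul_eq_mul] at this
    rw [show 1 / 2 * x + 1 / 2 * (a + b - x) = (a + b) / 2 by ring] at this
    linarith
  have := intervalIntegral.integral_mono_on hab intervalIntegrable_const (hint.add hrefl) hpair
  rw [intervalIntegral.integral_const, intervalIntegral.integral_add hint hrefl,
    intervalIntegral.integral_comp_sub_left, add_sub_cancel_right, add_sub_cancel_left,
    smul_eq_mul] at this
  linarith

theorem AntitoneOn.mul_le_integral {f : ℝ → ℝ} {a b : ℝ} (hab : a ≤ b)
    (hf : AntitoneOn f (Icc a b)) : (b - a) * f b ≤ ∫ x in a..b, f x := by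
  have hint : IntervalIntegrable f volume a b :=
    (hf.mono (uIcc_of_le hab).subset).intervalIntegrable
  have := intervalIntegral.integral_mono_on hab intervalIntegrable_const hint
    fun x hx => hf hx (right_mem_Icc.2 hab) hx.2
  rwa [intervalIntegral.integral_const, smul_eq_mul] at this

theorem ConvexOn.mul_sum_midpoint_le_integral {f : ℝ → ℝ} {a h : ℝ} (hh : 0 ≤ h) (m : ℕ)
    (hf : ConvexOn ℝ (Icc a (a + m * h)) f) (hfc : ContinuousOn f (Icc a (a + m * h))) :
    h * ∑ k ∈ Finset.range m, f (a + (k + 1 / 2) * h) ≤ ∫ x in a..a + m * h, f x := by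
  induction m with
  | zero => simp
  | succ m ih =>
    have hle : a + m * h ≤ a + (m + 1 : ℕ) * h := by push_cast; nlinarith
    have hsub : Icc a (a + m * h) ⊆ Icc a (a + (m + 1 : ℕ) * h) :=
      Icc_subset_Icc_right hle
    have hsub' : Icc (a + m * h) (a + (m + 1 : ℕ) * h) ⊆ Icc a (a + (m + 1 : ℕ) * h) :=
      Icc_subset_Icc_left (by nlinarith [(m.cast_nonneg : (0:ℝ) ≤ m)])
    have hlast := (hf.subset hsub' (convex_Icc _ _)).mul_le_integral_midpoint hle
      (hfc.mono hsub')
    rw [Finset.sum_range_succ, mul_add, ← intervalIntegral.integral_add_adjacent_intervals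
      ((hfc.mono hsub).intervalIntegrable_of_Icc (by nlinarith [(m.cast_nonneg : (0:ℝ) ≤ m)]))
      ((hfc.mono hsub').intervalIntegrable_of_Icc hle)]
    have hmid : (a + m * h + (a + (m + 1 : ℕ) * h)) / 2 = a + (m + 1 / 2) * h := by
      push_cast; ring
    have hlen : a + (m + 1 : ℕ) * h - (a + m * h) = h := by push_cast; ring
    rw [hmid, hlen] at hlast
    linarith [ih (hf.subset hsub (convex_Icc _ _)) (hfc.mono hsub)]

open Finset in
theorem sum_max_sub_le_add_card {ι : Type*} (t : Finset ι) (a : ι → ℝ) (τ : ℝ)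
    (ha : ∀ i ∈ t, 0 ≤ a i) :
    ∑ i ∈ t, max (a i - τ) 0 ≤ ∑ i ∈ t, (a i - τ) + max τ 0 * #(t.filter fun i => a i < τ) := by
  rw [show max τ 0 * #(t.filter fun i => a i < τ) = ∑ i ∈ t, if a i < τ then max τ 0 else 0 by
    rw [← sum_filter, sum_const, nsmul_eq_mul, mul_comm], ← sum_add_distrib]
  refine sum_le_sum fun i hi => ?_
  split_ifs with h
  · have := ha i hi
    rw [max_le_iff]; constructor <;> linarith [le_max_left τ 0, le_max_right τ 0]
  · rw [max_eq_left (by linarith)]; linarith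

open Finset in
theorem card_filter_range_lt_le (n : ℕ) {y : ℝ} (hy : y ≤ n) :
    (#((range n).filter fun i : ℕ => y < i) : ℝ) ≤ n - y := by
  have hsub : (range n).filter (fun i : ℕ => y < i) ⊆ Ico ⌈y⌉₊ n := fun i hi => by
    rw [mem_filter, Finset.mem_range] at hi
    exact mem_Ico.2 ⟨Nat.ceil_le.2 hi.2.le, hi.1⟩
  have hcard := Finset.card_le_card hsub
  rw [Nat.card_Ico] at hcard
  rcases le_total ⌈y⌉₊ n with h | h
  · calc (#((range n).filter fun i : ℕ => y < i) : ℝ) ≤ ((n - ⌈y⌉₊ : ℕ) : ℝ) := by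
          exact_mod_cast hcard
      _ ≤ n - y := by rw [Nat.cast_sub h]; linarith [Nat.le_ceil y]
  · rw [Nat.sub_eq_zero_of_le h, Nat.le_zero] at hcard
    rw [hcard]; push_cast; linarith

theorem natCast_toNat_floor_le_max (y : ℝ) : ((⌊y⌋.toNat : ℕ) : ℝ) ≤ max y 0 := by
  rcases le_or_gt 0 y with hy | hy
  · rw [Int.floor_toNat]; exact (Nat.floor_le hy).trans (le_max_left _ _)
  · simp [Int.toNat_of_nonpos (Int.floor_nonpos hy.le)]

theorem exists_nat_add_mul_mem_Ioc {L σ h : ℝ} (hh : 0 < h) (hσ : σ * h ≤ L) :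
    ∃ n : ℕ, (n + σ) * h ∈ Ioc (L - h) L := by
  have hσL : σ ≤ L / h := by rwa [le_div_iff₀ hh]
  refine ⟨⌊L / h - σ⌋₊, ?_, ?_⟩
  · have := (div_lt_iff₀ hh).1 (show L / h < ⌊L / h - σ⌋₊ + σ + 1 by
      linarith [Nat.sub_one_lt_floor (L / h - σ)])
    linarith
  · rw [← le_div_iff₀ hh]; linarith [Nat.floor_le (sub_nonneg.2 hσL)]

theorem sum_columns_le_integral {f : ℝ → ℝ} {L M σ ε h : ℝ} {n : ℕ}
    (hfc : ContinuousOn f (Icc 0 L)) (hfa : AntitoneOn f (Icc 0 L))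
    (hconv : ConvexOn ℝ (Icc 0 L) f) (hf0 : f 0 = M) (hfL : f L = 0)
    (hσ : -1 < σ) (hh : 0 < h) (hn : 2 ≤ n) (hnL : (n + σ) * h ≤ L)
    (hfirst : M - ε ≤ f ((σ + 3 / 2) * h)) (hlast : f ((n + σ) * h) ≤ ε) :
    h * ∑ i ∈ Finset.range n, f ((i + 1 + σ) * h) ≤
      (∫ x in 0..L, f x) - (σ + 1 / 2) * M * h + (σ + 2) * ε * h := by
  obtain ⟨m, rfl⟩ : ∃ m, n = m + 2 := ⟨n - 2, by omega⟩
  -- the cells `[0, a]`, `[a, b]` (midpoint rule) and `[b, x]` carry the columns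
  set a := (σ + 3 / 2) * h
  set b := a + m * h
  set x := ((m + 2 : ℕ) + σ) * h
  have hx₀ : 0 ≤ (0 + 1 + σ) * h := mul_nonneg (by linarith) hh.le
  have hx₀a : (0 + 1 + σ) * h ≤ a := by simp only [a]; nlinarith
  have ha : 0 ≤ a := hx₀.trans hx₀a
  have hab : a ≤ b := le_add_of_nonneg_right (by positivity)
  have hbx : x - b = h / 2 := by simp only [x, b, a]; push_cast; ring
  have hb : 0 ≤ b := ha.trans hab
  have hbx' : b ≤ x := by linarith
  have hint : ∀ {u v}, 0 ≤ u → u ≤ v → v ≤ L → IntervalIntegrable f volume u v :=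
    fun hu huv hv => (hfc.mono (Icc_subset_Icc hu hv)).intervalIntegrable_of_Icc huv
  have hcol₀ : h * f ((0 + 1 + σ) * h) ≤
      (∫ y in 0..a, f y) + (σ + 3 / 2) * ε * h - (σ + 1 / 2) * M * h := by
    have hfM : f ((0 + 1 + σ) * h) ≤ M :=
      hf0 ▸ hfa ⟨le_rfl, hnL.trans' (hb.trans hbx')⟩ ⟨hx₀, by linarith⟩ hx₀
    have hint₀ := (hfa.mono (Icc_subset_Icc_right (hab.trans (hbx'.trans hnL)))).mul_le_integral ha
    rw [sub_zero] at hint₀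
    have : a * (M - ε) = (σ + 3 / 2) * M * h - (σ + 3 / 2) * ε * h := by simp only [a]; ring
    linear_combination hint₀ + mul_le_mul_of_nonneg_left hfirst ha +
      mul_le_mul_of_nonneg_left hfM hh.le + this
  have hmid : h * ∑ k ∈ Finset.range m, f ((k + 1 + 1 + σ) * h) ≤ ∫ y in a..b, f y := by
    have hsub := Icc_subset_Icc ha (hbx'.trans hnL)
    have := (hconv.subset hsub (convex_Icc _ _)).mul_sum_midpoint_le_integral hh.le m
      (hfc.mono hsub)
    convert this using 4 with k
    simp only [a]; ring
  have hcolₙ : h * f (((m + 1 : ℕ) + 1 + σ) * h) ≤ (∫ y in b..x, f y) + ε * (h / 2) := by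
    have := (hfa.mono (Icc_subset_Icc hb hnL)).mul_le_integral hbx'
    rw [hbx] at this
    rw [show ((m + 1 : ℕ) + 1 + σ) * h = x by simp only [x]; push_cast; ring]
    nlinarith
  have hrest : 0 ≤ ∫ y in x..L, f y := intervalIntegral.integral_nonneg hnL fun y hy =>
    hfL ▸ hfa ⟨(hb.trans hbx').trans hy.1, hy.2⟩ ⟨by linarith, le_rfl⟩ hy.2
  rw [← intervalIntegral.integral_add_adjacent_intervals (hint le_rfl (hb.trans hbx') hnL)
      (hint (hb.trans hbx') hnL le_rfl),
    ← intervalIntegral.integral_add_adjacent_intervals (hint le_rfl hb (hbx'.trans hnL))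
      (hint hb hbx' hnL),
    ← intervalIntegral.integral_add_adjacent_intervals (hint le_rfl ha (hab.trans (hbx'.trans hnL)))
      (hint ha hab (hbx'.trans hnL)),
    Finset.sum_range_succ, Finset.sum_range_succ']
  push_cast at hcolₙ ⊢
  linarith

theorem countN_le_sum_max (f : ℝ → ℝ) (σ τ L r s : ℝ) (n : ℕ)
    (hn : ∀ j : ℤ, 1 ≤ j → ((j : ℝ) + σ) * s / r ≤ L → j ≤ n) :
    (countN f σ τ L r s : ℝ) ≤
      ∑ i ∈ Finset.range n, max (r * s * f ((i + 1 + σ) * (s / r)) - τ) 0 := by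
  classical
  set g : ℕ → ℝ := fun i => r * s * f ((i + 1 + σ) * (s / r)) - τ
  let T : Finset (ℤ × ℤ) :=
    (Finset.range n).biUnion fun i => {((i : ℤ) + 1)} ×ˢ Finset.Icc 1 ⌊g i⌋
  have hsub : {p : ℤ × ℤ | 1 ≤ p.1 ∧ 1 ≤ p.2 ∧ ((p.1 : ℝ) + σ) * s / r ≤ L ∧
      (p.2 : ℝ) + τ ≤ r * s * f (((p.1 : ℝ) + σ) * s / r)} ⊆ T := by
    rintro ⟨j, k⟩ ⟨hj, hk, hjL, hkf⟩
    obtain ⟨i, rfl⟩ : ∃ i : ℕ, j = i + 1 := ⟨(j - 1).toNat, by omega⟩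
    have hin : i < n := by have := hn _ hj hjL; omega
    push_cast at hjL hkf
    rw [mul_div_assoc] at hkf
    simp only [T, Finset.coe_biUnion, Finset.coe_range, mem_iUnion, Finset.coe_product,
      Finset.coe_singleton, Finset.coe_Icc, mem_prod, mem_singleton_iff, mem_Icc]
    exact ⟨i, hin, rfl, hk, Int.le_floor.2 (by simp only [g]; linarith)⟩
  calc (countN f σ τ L r s : ℝ) ≤ T.card := by
        rw [countN, ← Set.ncard_coe_finset]
        exact_mod_cast Set.ncard_le_ncard hsub T.finite_toSet
    _ ≤ ∑ i ∈ Finset.range n, ((⌊g i⌋.toNat : ℕ) : ℝ) := by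
        refine (Nat.cast_le.2 Finset.card_biUnion_le).trans ?_
        push_cast [Finset.card_product, Int.card_Icc]
        simp
    _ ≤ _ := Finset.sum_le_sum fun i _ => natCast_toNat_floor_le_max (g i)

open Finset in
theorem card_filter_mul_lt_le {f : ℝ → ℝ} {L σ τ κ h δ : ℝ} {n : ℕ}
    (hfa : AntitoneOn f (Icc 0 L)) (hσ : -1 < σ) (hh : 0 < h) (hκ : 0 ≤ κ)
    (hnL : (n + σ) * h ≤ L) (hLn : L - h < (n + σ) * h) (hδ : δ ∈ Icc 0 L)
    (htail : τ ≤ κ * f (L - δ)) :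
    (#((range n).filter fun i : ℕ => κ * f ((i + 1 + σ) * h) < τ) : ℝ) ≤ δ / h + 1 := by
  -- a column lower than `τ` lies to the right of `L - δ`
  have hsub : (range n).filter (fun i : ℕ => κ * f ((i + 1 + σ) * h) < τ) ⊆
      (range n).filter (fun i : ℕ => (L - δ) / h - 1 - σ < i) := fun i hi => by
    rw [mem_filter, Finset.mem_range] at hi ⊢
    refine ⟨hi.1, lt_of_not_ge fun hle => hi.2.not_ge (htail.trans ?_)⟩
    have hi' : (i : ℝ) + 1 ≤ n := by exact_mod_cast hi.1
    have hxδ : (i + 1 + σ) * h ≤ L - δ := by rw [← le_div_iff₀ hh]; linarith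
    exact mul_le_mul_of_nonneg_left (hfa ⟨mul_nonneg (by linarith [i.cast_nonneg (α := ℝ)]) hh.le,
      by linarith [hδ.1]⟩ ⟨by linarith [hδ.2], by linarith [hδ.1]⟩ hxδ) hκ
  have hLn' : L / h < n + σ + 1 := by rw [div_lt_iff₀ hh]; linarith
  have hnL' : n + σ ≤ L / h := by rw [le_div_iff₀ hh]; exact hnL
  have := card_filter_range_lt_le n (y := (L - δ) / h - 1 - σ) (by
    rw [sub_div]; linarith [div_nonneg hδ.1 hh.le])
  refine (Nat.cast_le.2 (Finset.card_le_card hsub)).trans (this.trans ?_)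
  rw [sub_div]; linarith

open Finset in
theorem countN_le_of_mesh {f : ℝ → ℝ} {L M σ τ r s ε δ : ℝ}
    (hfc : ContinuousOn f (Icc 0 L)) (hfa : AntitoneOn f (Icc 0 L))
    (hconv : ConvexOn ℝ (Icc 0 L) f) (hf0 : f 0 = M) (hfL : f L = 0)
    (hσ : -1 < σ) (hr : 0 < r) (hs : 0 < s) (hmesh : (σ + 3) * (s / r) ≤ L)
    (hfirst : M - ε ≤ f ((σ + 3 / 2) * (s / r))) (hlast : f (L - s / r) ≤ ε)
    (hδ : δ ∈ Icc 0 L) (htail : τ ≤ r * s * f (L - δ)) :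
    (countN f σ τ L r s : ℝ) ≤ r ^ 2 * (∫ x in 0..L, f x)
      - r * (s⁻¹ * τ * L + s * (σ + 1 / 2) * M)
      + (r * s * (σ + 2) * ε + max τ 0 * (δ * r / s + 1) + |τ| * (|σ| + 1)) := by
  set h := s / r with hh_def
  have hh : 0 < h := div_pos hs hr
  obtain ⟨n, hLn, hnL⟩ := exists_nat_add_mul_mem_Ioc hh (show σ * h ≤ L by nlinarith)
  have hLn' : L / h < n + σ + 1 := by rw [div_lt_iff₀ hh]; linarith
  have hnL' : n + σ ≤ L / h := by rw [le_div_iff₀ hh]; exact hnL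
  have hn : 2 ≤ n := by exact_mod_cast (show (2 : ℝ) < n by nlinarith).le
  have hcol : ∀ i ∈ range n, (i + 1 + σ) * h ∈ Icc 0 L := fun i hi => by
    have : (i : ℝ) + 1 ≤ n := by exact_mod_cast Finset.mem_range.1 hi
    exact ⟨mul_nonneg (by linarith [i.cast_nonneg (α := ℝ)]) hh.le,
      hnL.trans' (mul_le_mul_of_nonneg_right (by linarith) hh.le)⟩
  have hcount := countN_le_sum_max f σ τ L r s n fun j _ hjL => by
    rw [mul_div_assoc, ← le_div_iff₀ hh] at hjL
    exact_mod_cast Int.lt_add_one_iff.1 (by exact_mod_cast (show (j : ℝ) < n + 1 by linarith))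
  have hsplit := sum_max_sub_le_add_card (range n) (fun i => r * s * f ((i + 1 + σ) * h)) τ
    fun i hi => mul_nonneg (by positivity)
      (hfL ▸ hfa (hcol i hi) ⟨(hcol i hi).1.trans (hcol i hi).2, le_rfl⟩ (hcol i hi).2)
  have hcard := card_filter_mul_lt_le hfa hσ hh (by positivity) hnL hLn hδ htail
  have hsum := sum_columns_le_integral hfc hfa hconv hf0 hfL hσ hh hn hnL hfirst
    ((hfa ⟨by nlinarith, by linarith⟩ ⟨by nlinarith, hnL⟩ hLn.le).trans hlast)
  have hheights : ∑ i ∈ range n, (r * s * f ((i + 1 + σ) * h) - τ) =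
      r ^ 2 * (h * ∑ i ∈ range n, f ((i + 1 + σ) * h)) - n * τ := by
    rw [sum_sub_distrib, ← mul_sum, sum_const, card_range, nsmul_eq_mul, hh_def]
    field_simp
  have hnτ : τ * (L / h) - n * τ ≤ |τ| * (|σ| + 1) := calc
    τ * (L / h) - n * τ = τ * (L / h - n) := by ring
    _ ≤ |τ * (L / h - n)| := le_abs_self _
    _ ≤ |τ| * (|σ| + 1) := by
      rw [abs_mul]
      exact mul_le_mul_of_nonneg_left (abs_le.2 ⟨by linarith [neg_abs_le σ],
        by linarith [le_abs_self σ]⟩) (abs_nonneg τ)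
  have hrescale : r ^ 2 * ((∫ x in 0..L, f x) - (σ + 1 / 2) * M * h + (σ + 2) * ε * h)
      - τ * (L / h) + max τ 0 * (δ / h + 1) = r ^ 2 * (∫ x in 0..L, f x)
      - r * (s⁻¹ * τ * L + s * (σ + 1 / 2) * M)
      + (r * s * (σ + 2) * ε + max τ 0 * (δ * r / s + 1)) := by
    rw [hh_def]; field_simp; ring
  rw [← hh_def] at hcount
  nlinarith [mul_le_mul_of_nonneg_left hsum (sq_nonneg r),
    mul_le_mul_of_nonneg_left hcard (le_max_right τ 0)]

theorem eventually_countN_le {f : ℝ → ℝ} {L M σ τ c ε δ : ℝ}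
    (hfc : ContinuousOn f (Icc 0 L)) (hfa : StrictAntiOn f (Icc 0 L))
    (hconv : ConvexOn ℝ (Icc 0 L) f) (hf0 : f 0 = M) (hfL : f L = 0)
    (hσ : -1 < σ) (hc : 0 < c) (hε : 0 < ε) (hδ : δ ∈ Ioc 0 L) :
    ∀ᶠ r in atTop, ∀ s ∈ Ioo c⁻¹ c, (countN f σ τ L r s : ℝ) ≤ r ^ 2 * (∫ x in 0..L, f x)
      - r * (s⁻¹ * τ * L + s * (σ + 1 / 2) * M)
      + (r * c * ((σ + 2) * ε + max τ 0 * δ) + (max τ 0 + |τ| * (|σ| + 1))) := by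
  have hL : 0 < L := hδ.1.trans_le hδ.2
  obtain ⟨q, hq, hfq⟩ := hfc.exists_mem_Ioc_lt_apply hL (y := M - ε) (by linarith)
  obtain ⟨p, hp, hfp⟩ := hfc.exists_mem_Ico_apply_lt hL (y := ε) (by linarith)
  have hfδ : 0 < f (L - δ) :=
    hfL ▸ hfa ⟨by linarith [hδ.2], by linarith [hδ.1]⟩ ⟨hL.le, le_rfl⟩ (by linarith [hδ.1])
  -- a mesh `s / r ≤ K` keeps `(σ + 3/2) s / r` below `q` and `L - s / r` above `p`
  set K := min (L / (σ + 3)) (min (q / (σ + 3 / 2)) (L - p))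
  have hK : 0 < K := lt_min (div_pos hL (by linarith)) (lt_min (div_pos hq.1 (by linarith))
    (by linarith [hp.2]))
  filter_upwards [eventually_gt_atTop 0, eventually_ge_atTop (c / K),
    eventually_ge_atTop (c * max τ 0 / f (L - δ))] with r hr hrK hrτ s ⟨hs₁, hs₂⟩
  have hs : 0 < s := (inv_pos.2 hc).trans hs₁
  have hh : s / r ≤ K := by
    rw [div_le_iff₀ hr]; rw [div_le_iff₀ hK] at hrK; linarith
  have hsc : s⁻¹ < c := inv_lt_of_inv_lt₀ hc hs₁
  have hhL : s / r ≤ L - p := hh.trans ((min_le_right _ _).trans (min_le_right _ _))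
  refine (countN_le_of_mesh (ε := ε) hfc hfa.antitoneOn hconv hf0 hfL hσ hr hs ?_ ?_ ?_
    ⟨hδ.1.le, hδ.2⟩ ?_).trans (add_le_add_right ?_ _)
  · exact (le_div_iff₀' (by linarith)).1 (hh.trans (min_le_left _ _))
  · have hxq : (σ + 3 / 2) * (s / r) ≤ q :=
      (le_div_iff₀' (by linarith)).1 (hh.trans ((min_le_right _ _).trans (min_le_left _ _)))
    exact hfq.le.trans (hfa.antitoneOn ⟨mul_nonneg (by linarith) (div_pos hs hr).le,
      hxq.trans hq.2⟩ ⟨hq.1.le, hq.2⟩ hxq)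
  · exact (hfa.antitoneOn ⟨hp.1, hp.2.le⟩ ⟨by linarith [hp.1], by linarith [div_pos hs hr]⟩
      (by linarith)).trans hfp.le
  · rw [div_le_iff₀ hfδ] at hrτ
    have : 1 < c * s := by rwa [inv_lt_iff_one_lt_mul₀' hc] at hs₁
    nlinarith [le_max_left τ 0, le_max_right τ 0]
  · have h₁ : r * s * (σ + 2) * ε ≤ r * c * (σ + 2) * ε := by gcongr; linarith
    have h₂ : max τ 0 * (δ * r / s) ≤ max τ 0 * (δ * r * c) := by
      rw [div_eq_mul_inv]; gcongr; exact mul_nonneg hδ.1.le hr.le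
    linarith

theorem counting_improved_upper_bound_convex_general (L M σ τ : ℝ) (f : ℝ → ℝ)
    (hL : 0 < L)
    (hfc : ContinuousOn f (Icc 0 L)) (hfa : StrictAntiOn f (Icc 0 L))
    (hf0 : f 0 = M) (hfL : f L = 0)
    (hconv : ConvexOn ℝ (Icc 0 L) f)
    (hσ : -1 < σ) :
    ∀ c > (1 : ℝ), ∀ η > (0 : ℝ), ∃ r₀ > (0 : ℝ), ∀ r ≥ r₀, ∀ s : ℝ, c⁻¹ < s → s < c →
      (countN f σ τ L r s : ℝ) ≤
        r ^ 2 * (∫ x in (0 : ℝ)..L, f x)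
          - r * (s⁻¹ * τ * L + s * (σ + 1 / 2) * M) + η * r := by
  intro c hc η hη
  have hc₀ : 0 < c := by linarith
  have hσ₂ : 0 < σ + 2 := by linarith
  set ε := η / (4 * c * (σ + 2))
  set δ := min L (η / (4 * c * (max τ 0 + 1)))
  have hδ : δ ∈ Ioc 0 L := ⟨lt_min hL (by positivity), min_le_left _ _⟩
  have hεη : c * ((σ + 2) * ε) = η / 4 := by simp only [ε]; field_simp
  have hδη : c * (max τ 0 * δ) ≤ η / 4 := calc
    c * (max τ 0 * δ) ≤ c * (max τ 0 * (η / (4 * c * (max τ 0 + 1)))) := by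
      gcongr
      exact min_le_right _ _
    _ ≤ η / 4 := by
      rw [← mul_assoc, mul_div_assoc', div_le_div_iff₀ (by positivity) (by norm_num)]
      nlinarith [le_max_right τ 0]
  obtain ⟨r₀, hr₀⟩ := eventually_atTop.1 ((eventually_countN_le (τ := τ) (ε := ε) hfc hfa hconv
    hf0 hfL hσ hc₀ (by positivity) hδ).and
    (eventually_ge_atTop (2 * (max τ 0 + |τ| * (|σ| + 1)) / η)))
  refine ⟨max r₀ 1, by positivity, fun r hr s hs₁ hs₂ => ?_⟩
  obtain ⟨hN, hrC⟩ := hr₀ r (le_of_max_le_left hr)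
  rw [div_le_iff₀ hη] at hrC
  have hr₀ : 0 ≤ r := by linarith [le_max_right r₀ 1]
  have : r * c * ((σ + 2) * ε + max τ 0 * δ) ≤ r * (η / 2) := calc
    _ = r * (c * ((σ + 2) * ε) + c * (max τ 0 * δ)) := by ring
    _ ≤ r * (η / 2) := by gcongr; linarith
  linarith [hN s ⟨hs₁, hs₂⟩]

/-- Improved two-term upper bound on the counting function for convex curves:
for `s` bounded above and below away from `0`,
`N(r,s) ≤ r² Area(Γ) − r(s⁻¹ τ L + s(σ+½)M) + o(r)` as `r → ∞`. -/
theorem counting_improved_upper_bound_convex (L M σ τ : ℝ) (f : ℝ → ℝ)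
    (hL : 0 < L) (hM : 0 < M)
    (hfc : ContinuousOn f (Icc 0 L)) (hfa : StrictAntiOn f (Icc 0 L))
    (hf0 : f 0 = M) (hfL : f L = 0)
    (hconv : ConvexOn ℝ (Icc 0 L) f)
    (hσ : -1 < σ) (hτ : -1 < τ) :
    ∀ c > (1 : ℝ), ∀ η > (0 : ℝ), ∃ r₀ > (0 : ℝ), ∀ r ≥ r₀, ∀ s : ℝ, c⁻¹ < s → s < c →
      (countN f σ τ L r s : ℝ) ≤
        r ^ 2 * (∫ x in (0 : ℝ)..L, f x)
          - r * (s⁻¹ * τ * L + s * (σ + 1 / 2) * M) + η * r :=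
  counting_improved_upper_bound_convex_general L M σ τ f hL hfc hfa hf0 hfL hconv hσ
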